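/- arXiv:0804.0922 — 3 statements merged into one kernel-verified Lean document; each statement's English description precedes it below -/
import Mathlib

section
/- Let A be an algebra, a, b, x, y ∈ A with a, b invertible, λ, q ∈ k nonzero, such that gxg⁻¹ = qx and gyg⁻¹ = q⁻¹y for g = a and g = b, and yx − b x b⁻¹ y = λ(ab − 1) (i.e. the left b-commutator _b[y,x] = λ(ab−1)). Then for every natural number m ≥ 1: y^m x − b^m x b^{-m} y^m = λ (m)_q (q^{m−1} ab − 1) y^{m−1}, where (m)_q = 1 + q + ... + q^{m−1}. -/
/-!
Conjugation by `b` scales `x` by `q`, and `y` commutes with `ab` up to `q²`, so moving `y` past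
`x * y ^ n` and past `(q ^ n • ab - 1) * y ^ n` only produces scalars. Multiplying the identity
for `m` on the left by `y` and using `_b[y,x] = λ(ab - 1)` once more yields the identity for
`m + 1`; the coefficients match because `(m)_q (q - 1) = q ^ m - 1`.
-/

open Finset

section QCommutation

variable {k A : Type*} [Field k] [Ring A] [Algebra k A]

theorem Units.mul_eq_smul_mul_of_conj_eq_smul {u : Aˣ} {z : A} {c : k}
    (h : (u : A) * z * ((u⁻¹ : Aˣ) : A) = c • z) : (u : A) * z = c • (z * u) := by
  rw [← smul_mul_assoc, ← Units.mul_inv_eq_iff_eq_mul, h]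

theorem Units.mul_eq_smul_mul_of_conj_eq_inv_smul {u : Aˣ} {z : A} {c : k} (hc : c ≠ 0)
    (h : (u : A) * z * ((u⁻¹ : Aˣ) : A) = c⁻¹ • z) : z * u = c • ((u : A) * z) := by
  rw [Units.mul_eq_smul_mul_of_conj_eq_smul h, smul_smul, mul_inv_cancel₀ hc, one_smul]

theorem pow_mul_eq_smul_mul_pow {u z : A} {c : k} (h : u * z = c • (z * u)) (m : ℕ) :
    u ^ m * z = c ^ m • (z * u ^ m) := by
  induction m with
  | zero => simp
  | succ m ih =>
    rw [pow_succ', mul_assoc, ih, mul_smul_comm, ← mul_assoc, h, smul_mul_assoc, smul_smul,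
      mul_assoc, ← pow_succ', ← pow_succ]

theorem Units.conj_pow_eq_pow_smul {u : Aˣ} {z : A} {c : k}
    (h : (u : A) * z * ((u⁻¹ : Aˣ) : A) = c • z) (m : ℕ) :
    (u : A) ^ m * z * ((u⁻¹ : Aˣ) : A) ^ m = c ^ m • z := by
  rw [pow_mul_eq_smul_mul_pow (Units.mul_eq_smul_mul_of_conj_eq_smul h), smul_mul_assoc,
    mul_assoc, ← Units.val_pow_eq_pow_val, ← Units.val_pow_eq_pow_val, inv_pow,
    Units.mul_inv, mul_one]

theorem mul_mul_eq_smul_mul_mul_of_mul_eq_smul_mul {y u v : A} {c d : k}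
    (hu : y * u = c • (u * y)) (hv : y * v = d • (v * y)) :
    y * (u * v) = (c * d) • (u * v * y) := by
  rw [← mul_assoc, hu, smul_mul_assoc, mul_assoc, hv, mul_smul_comm, smul_smul, ← mul_assoc]

theorem pow_succ_mul_sub_smul_mul_pow_succ {x y D : A} {q lam : k}
    (hyD : y * D = q ^ 2 • (D * y)) (hyx : y * x - q • (x * y) = lam • (D - 1)) (n : ℕ) :
    y ^ (n + 1) * x - q ^ (n + 1) • (x * y ^ (n + 1))
      = (lam * ∑ i ∈ range (n + 1), q ^ i) • ((q ^ n • D - 1) * y ^ n) := by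
  induction n with
  | zero => simpa using hyx
  | succ n ih =>
    rw [sub_eq_iff_eq_add'] at ih hyx
    have hyDy :
        y * ((q ^ n • D - 1) * y ^ n) = q ^ (n + 2) • (D * y ^ (n + 1)) - y ^ (n + 1) := by
      rw [← mul_assoc, mul_sub, mul_smul_comm, hyD, mul_one, sub_mul, smul_mul_assoc,
        smul_mul_assoc, mul_assoc, ← pow_succ', smul_smul, ← pow_add]
    have hyxy : y * (x * y ^ (n + 1))
        = q • (x * y ^ (n + 2)) + lam • (D * y ^ (n + 1)) - lam • y ^ (n + 1) := by
      rw [← mul_assoc, hyx, add_mul, smul_mul_assoc, smul_mul_assoc, mul_assoc, ← pow_succ',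
        sub_mul, one_mul, smul_sub, add_sub_assoc]
    have hgeom := geom_sum_mul q (n + 1)
    have hmul_left : y ^ (n + 2) * x = y * (y ^ (n + 1) * x) := by rw [pow_succ', mul_assoc]
    rw [hmul_left, ih, mul_add, mul_smul_comm, mul_smul_comm, hyxy, hyDy,
      sum_range_succ _ (n + 1), sub_mul, one_mul, smul_mul_assoc]
    match_scalars
    · ring
    -- the coefficients of `D * y ^ (n + 1)` agree by the geometric sum identity
    · linear_combination (lam * q ^ (n + 1)) * hgeom
    · ring

end QCommutation

theorem power_commutator_rel_one_general {k A : Type*} [Field k] [Ring A] [Algebra k A]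
    (a b : Aˣ) (x y : A) (q lam : k) (hq : q ≠ 0)
    (hbx : (b : A) * x * ((b⁻¹ : Aˣ) : A) = q • x)
    (hay : (a : A) * y * ((a⁻¹ : Aˣ) : A) = q⁻¹ • y)
    (hby : (b : A) * y * ((b⁻¹ : Aˣ) : A) = q⁻¹ • y)
    (hc : y * x - ((b : A) * x * ((b⁻¹ : Aˣ) : A)) * y = lam • ((a : A) * (b : A) - 1)) :
    ∀ m : ℕ, 1 ≤ m →
      y ^ m * x - ((b : A) ^ m * x * ((b⁻¹ : Aˣ) : A) ^ m) * y ^ m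
        = (lam * ∑ i ∈ Finset.range m, q ^ i) •
            ((q ^ (m - 1) • ((a : A) * (b : A)) - 1) * y ^ (m - 1)) := by
  have hyab : y * ((a : A) * b) = q ^ 2 • ((a : A) * b * y) := by
    rw [sq]
    exact mul_mul_eq_smul_mul_mul_of_mul_eq_smul_mul
      (Units.mul_eq_smul_mul_of_conj_eq_inv_smul hq hay)
      (Units.mul_eq_smul_mul_of_conj_eq_inv_smul hq hby)
  rw [hbx, smul_mul_assoc] at hc
  intro m hm
  obtain ⟨n, rfl⟩ := Nat.exists_eq_add_of_le' hm
  rw [Units.conj_pow_eq_pow_smul hbx, smul_mul_assoc, Nat.add_sub_cancel]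
  exact pow_succ_mul_sub_smul_mul_pow_succ hyab hc n

/-- Lemma on powers: `_{b^m}[y^m, x] = λ (m)_q (q^{m-1} ab - 1) y^{m-1}`. -/
theorem power_commutator_rel_one {k A : Type*} [Field k] [CharZero k] [Ring A] [Algebra k A]
    (a b : Aˣ) (x y : A) (q lam : k) (hq : q ≠ 0) (hlam : lam ≠ 0)
    (hax : (a : A) * x * ((a⁻¹ : Aˣ) : A) = q • x)
    (hbx : (b : A) * x * ((b⁻¹ : Aˣ) : A) = q • x)
    (hay : (a : A) * y * ((a⁻¹ : Aˣ) : A) = q⁻¹ • y)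
    (hby : (b : A) * y * ((b⁻¹ : Aˣ) : A) = q⁻¹ • y)
    (hc : y * x - ((b : A) * x * ((b⁻¹ : Aˣ) : A)) * y = lam • ((a : A) * (b : A) - 1)) :
    ∀ m : ℕ, 1 ≤ m →
      y ^ m * x - ((b : A) ^ m * x * ((b⁻¹ : Aˣ) : A) ^ m) * y ^ m
        = (lam * ∑ i ∈ Finset.range m, q ^ i) •
            ((q ^ (m - 1) • ((a : A) * (b : A)) - 1) * y ^ (m - 1)) :=
  power_commutator_rel_one_general a b x y q lam hq hbx hay hby hc
end

section
/- Under the hypotheses of the rank-one commutation setup (gxg⁻¹ = qx, gyg⁻¹ = q⁻¹y for g = a, b invertible, and _b[y,x] = λ(ab−1)), for all positive integers j and k one has _{b^j}[y^j, x^k] = Σ_{i=1}^{min(j,k)} x^{k−i} f_i^{j,k} y^{j−i}, where f_i^{j,k} = λ^i · binom(j,i)_q · binom(k,i)_q · (i)_q! · q^{(k−i)(j−i)} · Π_{m=1}^{i} (q^{j+k−m−i} ab − 1), with binom(n,m)_q the Gaussian binomial coefficient and (i)_q! the q-factorial. -/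
/-- The `q`-integer `(n)_q = 1 + q + ... + q^{n-1}`. -/
def qint {k : Type*} [Field k] (q : k) (n : ℕ) : k := ∑ i ∈ Finset.range n, q ^ i

/-- The `q`-factorial `(n)_q! = (1)_q (2)_q ⋯ (n)_q`. -/
def qfact {k : Type*} [Field k] (q : k) : ℕ → k
  | 0 => 1
  | n + 1 => qfact q n * qint q (n + 1)

/-- The Gaussian `q`-binomial coefficient, via the `q`-Pascal rule. -/
def qbinom {k : Type*} [Field k] (q : k) : ℕ → ℕ → k
  | _, 0 => 1
  | 0, _ + 1 => 0
  | n + 1, m + 1 => qbinom q n m + q ^ (m + 1) * qbinom q n (m + 1)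

/-!
Put `c = ab`. Conjugating by `a` and `b` gives `c x = q² x c`, `y c = q² c y` and
`y x = q x y + λ (c - 1)`, so `y ^ j * x ^ l` is a sum of terms `x^(l-i) f_i(c) y^(j-i)` with
polynomials `f_i ∈ k[X]`. Multiplying by `y` on the left and moving it to the right with
`y x^n = q^n x^n y + λ (n)_q x^(n-1) (q^(n-1) c - 1)` and `y f(c) = f(q² c) y` gives a recursion
in `j` for the `f_i`. The closed form satisfies it: after cancelling the common factors of the
products, what remains is a linear polynomial identity in `c`, which is the two `q`-Pascal rules
together with the absorption identity `(i+1)_q binom(n,i+1) = (n-i)_q binom(n,i)`.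
-/

open Polynomial Finset

section QNumbers

variable {k : Type*} [Field k] (q : k)

lemma qint_zero : qint q 0 = 0 := rfl

lemma qint_one : qint q 1 = 1 := by simp [qint]

lemma qint_succ (n : ℕ) : qint q (n + 1) = qint q n + q ^ n := sum_range_succ _ _

lemma qint_succ' (n : ℕ) : qint q (n + 1) = 1 + q * qint q n := by
  simp only [qint, sum_range_succ', pow_succ', mul_sum, pow_zero]
  ring

lemma qfact_succ (n : ℕ) : qfact q (n + 1) = qfact q n * qint q (n + 1) := rfl

lemma qbinom_zero_right (n : ℕ) : qbinom q n 0 = 1 := by cases n <;> rfl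

lemma qbinom_succ_succ (n m : ℕ) :
    qbinom q (n + 1) (m + 1) = qbinom q n m + q ^ (m + 1) * qbinom q n (m + 1) := rfl

lemma qbinom_eq_zero_of_lt : ∀ {n m : ℕ}, n < m → qbinom q n m = 0
  | 0, _ + 1, _ => rfl
  | n + 1, m + 1, h => by
    rw [qbinom_succ_succ, qbinom_eq_zero_of_lt (by omega), qbinom_eq_zero_of_lt (by omega),
      mul_zero, add_zero]

lemma qbinom_succ_succ' : ∀ n m : ℕ,
    qbinom q (n + 1) (m + 1) = q ^ (n - m) * qbinom q n m + qbinom q n (m + 1)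
  | 0, m => by simp [qbinom]
  | n + 1, 0 => by
    have ih := qbinom_succ_succ' n 0
    simp only [qbinom_succ_succ, qbinom_zero_right, Nat.sub_zero] at ih ⊢
    linear_combination q * ih
  | n + 1, m + 1 => by
    rw [qbinom_succ_succ q (n + 1), Nat.add_sub_add_right]
    rcases le_or_gt n m with h | h
    · rw [qbinom_eq_zero_of_lt q (by omega : n + 1 < m + 1 + 1), Nat.sub_eq_zero_of_le h]
      ring
    · obtain ⟨d, rfl⟩ := Nat.exists_eq_add_of_lt h
      have ih₀ := qbinom_succ_succ' (m + d + 1) m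
      have ih₁ := qbinom_succ_succ' (m + d + 1) (m + 1)
      have p₀ := qbinom_succ_succ q (m + d + 1) m
      have p₁ := qbinom_succ_succ q (m + d + 1) (m + 1)
      rw [show m + d + 1 - m = d + 1 by omega] at ih₀ ⊢
      rw [show m + d + 1 - (m + 1) = d by omega] at ih₁
      linear_combination ih₀ + q ^ (m + 2) * ih₁ - q ^ (d + 1) * p₀ - p₁

lemma qint_mul_qbinom_succ : ∀ n i : ℕ,
    qint q (i + 1) * qbinom q n (i + 1) = qint q (n - i) * qbinom q n i
  | 0, i => by simp [qbinom, qint]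
  | n + 1, 0 => by
    have ih := qint_mul_qbinom_succ n 0
    rw [qint_one, one_mul, Nat.sub_zero, qbinom_zero_right] at ih ⊢
    rw [qbinom_succ_succ, qbinom_zero_right, qint_succ', ih]
    ring
  | n + 1, i + 1 => by
    rw [Nat.add_sub_add_right]
    rcases le_or_gt n i with h | h
    · rw [qbinom_eq_zero_of_lt q (by omega : n + 1 < i + 1 + 1), Nat.sub_eq_zero_of_le h]
      simp [qint]
    · obtain ⟨d, rfl⟩ := Nat.exists_eq_add_of_lt h
      have ih₀ := qint_mul_qbinom_succ (i + d + 1) i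
      have ih₁ := qint_mul_qbinom_succ (i + d + 1) (i + 1)
      have p₀ := qbinom_succ_succ q (i + d + 1) i
      have p₁ := qbinom_succ_succ q (i + d + 1) (i + 1)
      rw [show i + d + 1 - i = d + 1 by omega] at ih₀ ⊢
      rw [show i + d + 1 - (i + 1) = d by omega] at ih₁
      linear_combination qint q (i + 2) * p₁ - qint q (d + 1) * p₀ + q ^ (i + 2) * ih₁ + ih₀
        + qbinom q (i + d + 1) (i + 1) * qint_succ q (i + 1)
        - q ^ (i + 1) * qbinom q (i + d + 1) (i + 1) * qint_succ' q d

end QNumbers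

section KacPolynomials

variable {k : Type*} [Field k] (q lam : k)

noncomputable def kacFactor (t i : ℕ) : k[X] := ∏ m ∈ range i, (C (q ^ (t + m)) * X - 1)

-- The paper's `f_i^{j,l}` as a polynomial in `c = ab`. For `i > min j l` the truncated
-- subtractions are harmless: one of the `q`-binomial factors vanishes.
noncomputable def kacCoeff (j l i : ℕ) : k[X] :=
  C (lam ^ i * qbinom q j i * qbinom q l i * qfact q i * q ^ ((l - i) * (j - i))) *
    kacFactor q (j + l - 2 * i) i

lemma kacFactor_succ (t i : ℕ) :
    kacFactor q t (i + 1) = kacFactor q t i * (C (q ^ (t + i)) * X - 1) :=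
  prod_range_succ _ _

lemma kacFactor_succ' (t i : ℕ) :
    kacFactor q t (i + 1) = (C (q ^ t) * X - 1) * kacFactor q (t + 1) i := by
  simp only [kacFactor, prod_range_succ', add_zero, mul_comm (C (q ^ t) * X - 1)]
  congr 1
  exact prod_congr rfl fun m _ => by rw [add_comm m 1, add_assoc]

lemma kacFactor_comp (t i : ℕ) :
    (kacFactor q t i).comp (C (q ^ 2) * X) = kacFactor q (t + 2) i := by
  simp only [kacFactor, Polynomial.prod_comp, sub_comp, mul_comp, C_comp, X_comp, one_comp]
  exact prod_congr rfl fun m _ => by rw [← mul_assoc, ← C_mul, ← pow_add, add_right_comm]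

variable {q lam}

lemma kacCoeff_eq_zero_of_lt_left {j l i : ℕ} (h : j < i) : kacCoeff q lam j l i = 0 := by
  simp [kacCoeff, qbinom_eq_zero_of_lt q h]

lemma kacCoeff_eq_zero_of_lt_right {j l i : ℕ} (h : l < i) : kacCoeff q lam j l i = 0 := by
  simp [kacCoeff, qbinom_eq_zero_of_lt q h]

variable (q lam)

lemma kacCoeff_zero (j l : ℕ) : kacCoeff q lam j l 0 = C (q ^ (l * j)) := by
  simp [kacCoeff, kacFactor, qbinom_zero_right, qfact]

lemma kacCoeff_succ_zero (j l : ℕ) :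
    kacCoeff q lam (j + 1) l 0 = C (q ^ l) * (kacCoeff q lam j l 0).comp (C (q ^ 2) * X) := by
  rw [kacCoeff_zero, kacCoeff_zero, C_comp, ← C_mul, ← pow_add, mul_add_one, add_comm]

lemma kacCoeff_succ_succ_of_le_of_lt {j l i : ℕ} (hj : i ≤ j) (hl : i < l) :
    kacCoeff q lam (j + 1) l (i + 1) =
      C (q ^ (l - (i + 1))) * (kacCoeff q lam j l (i + 1)).comp (C (q ^ 2) * X) +
        C (lam * qint q (l - i)) * (C (q ^ (l - i - 1)) * X - 1) * kacCoeff q lam j l i := by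
  obtain ⟨a, rfl⟩ := Nat.exists_eq_add_of_lt hl
  obtain ⟨d, rfl⟩ := Nat.exists_eq_add_of_le hj
  have hfirst : C (q ^ (i + a + 1 - (i + 1))) *
      (kacCoeff q lam (i + d) (i + a + 1) (i + 1)).comp (C (q ^ 2) * X) =
      C (lam ^ (i + 1) * qbinom q (i + d) (i + 1) * qbinom q (i + a + 1) (i + 1) *
        qfact q (i + 1) * q ^ (a * d)) * kacFactor q (a + d + 1) (i + 1) := by
    cases d with
    | zero => simp [kacCoeff, qbinom_eq_zero_of_lt q (Nat.lt_succ_self i)]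
    | succ d =>
      rw [kacCoeff, mul_comp, C_comp, kacFactor_comp, ← mul_assoc, ← C_mul,
        show i + (d + 1) + (i + a + 1) - 2 * (i + 1) + 2 = a + (d + 1) + 1 by omega,
        show i + a + 1 - (i + 1) = a by omega, show i + (d + 1) - (i + 1) = d by omega]
      ring_nf
  rw [hfirst, kacCoeff, kacCoeff,
    show i + d + 1 + (i + a + 1) - 2 * (i + 1) = a + d by omega,
    show i + d + (i + a + 1) - 2 * i = a + d + 1 by omega,
    show (i + a + 1 - (i + 1)) * (i + d + 1 - (i + 1)) = a * d by
      rw [show i + a + 1 - (i + 1) = a by omega, show i + d + 1 - (i + 1) = d by omega],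
    show (i + a + 1 - i) * (i + d - i) = (a + 1) * d by
      rw [show i + a + 1 - i = a + 1 by omega, show i + d - i = d by omega],
    show i + a + 1 - i = a + 1 by omega, show a + 1 - 1 = a by omega,
    kacFactor_succ' q (a + d), kacFactor_succ q (a + d + 1), qfact_succ]
  -- Both sides are now `kacFactor q (a + d + 1) i` times a linear polynomial in `X`: its
  -- coefficients match by the two `q`-Pascal rules, once absorption turns
  -- `(a + 1)_q binom(l, i)` into `(i + 1)_q binom(l, i + 1)`.
  have hP := congrArg C (qbinom_succ_succ q (i + d) i)
  have hD := congrArg C (qbinom_succ_succ' q (i + d) i)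
  have hA := congrArg C (qint_mul_qbinom_succ q (i + a + 1) i)
  rw [show i + d - i = d by omega] at hD
  rw [show i + a + 1 - i = a + 1 by omega] at hA
  simp only [map_add, map_mul, map_pow] at hP hD hA ⊢
  set G := kacFactor q (a + d + 1) i
  linear_combination
    (C lam ^ (i + 1) * C (qbinom q (i + a + 1) (i + 1)) * C (qfact q i) * C (qint q (i + 1)) *
      C q ^ (a * d) * G * C q ^ (a + d) * X) * hP
    - (C lam ^ (i + 1) * C (qbinom q (i + a + 1) (i + 1)) * C (qfact q i) * C (qint q (i + 1)) *
      C q ^ (a * d) * G) * hD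
    + (C lam ^ (i + 1) * C (qbinom q (i + d) i) * C (qfact q i) * C q ^ ((a + 1) * d) *
      (C q ^ a * X - 1) * G) * hA

lemma kacCoeff_succ_succ (j l i : ℕ) :
    kacCoeff q lam (j + 1) l (i + 1) =
      C (q ^ (l - (i + 1))) * (kacCoeff q lam j l (i + 1)).comp (C (q ^ 2) * X) +
        C (lam * qint q (l - i)) * (C (q ^ (l - i - 1)) * X - 1) * kacCoeff q lam j l i := by
  rcases le_or_gt l i with hl | hl
  · rw [kacCoeff_eq_zero_of_lt_right (by omega : l < i + 1),
      kacCoeff_eq_zero_of_lt_right (by omega : l < i + 1), Nat.sub_eq_zero_of_le hl, qint_zero]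
    simp
  rcases lt_or_ge j i with hj | hj
  · rw [kacCoeff_eq_zero_of_lt_left (by omega : j + 1 < i + 1),
      kacCoeff_eq_zero_of_lt_left (by omega : j < i + 1), kacCoeff_eq_zero_of_lt_left hj]
    simp
  exact kacCoeff_succ_succ_of_le_of_lt q lam hj hl

end KacPolynomials

section Relations

variable {k A : Type*} [Field k] [Ring A] [Algebra k A]

lemma SemiconjBy.aeval {y c c' : A} (h : SemiconjBy y c c') (p : k[X]) :
    SemiconjBy y (aeval c p) (aeval c' p) := by
  induction p using Polynomial.induction_on' with
  | add p r hp hr => simpa only [map_add] using hp.add_right hr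
  | monomial n a =>
    rw [aeval_monomial, aeval_monomial]
    exact SemiconjBy.mul_right (Algebra.commute_algebraMap_right a y) (h.pow_right n)

lemma SemiconjBy.pow_left_of_smul {u z : A} {r : k} (h : SemiconjBy u z (r • z)) (n : ℕ) :
    SemiconjBy (u ^ n) z (r ^ n • z) := by
  induction n with
  | zero => simp
  | succ n ih =>
    rw [pow_succ, pow_succ', mul_smul]
    exact (ih.smul_right r).mul_left h

variable {q lam : k} {c x y : A}

lemma y_mul_x_pow_succ (hyx : y * x = q • (x * y) + lam • (c - 1))
    (hcx : SemiconjBy c x (q ^ 2 • x)) (n : ℕ) :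
    y * x ^ (n + 1) =
      q ^ (n + 1) • (x ^ (n + 1) * y) +
        (lam * qint q (n + 1)) • (x ^ n * (q ^ n • c - 1)) := by
  induction n with
  | zero => simp [qint_one, hyx]
  | succ n ih =>
    have hshift : (q ^ n • c - 1) * x = x * (q ^ (n + 2) • c - 1) := by
      rw [sub_mul, smul_mul_assoc, hcx.eq, smul_mul_assoc, smul_smul, mul_sub, mul_smul_comm,
        ← pow_add, one_mul, mul_one]
    calc y * x ^ (n + 1 + 1) = y * x ^ (n + 1) * x := by rw [mul_assoc, ← pow_succ]
      _ = q ^ (n + 1) • (x ^ (n + 1) * (y * x)) +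
            (lam * qint q (n + 1)) • (x ^ n * ((q ^ n • c - 1) * x)) := by
        rw [ih, add_mul, smul_mul_assoc, smul_mul_assoc, mul_assoc, mul_assoc]
      _ = _ := by
        rw [hyx, hshift, ← mul_assoc (x ^ n), ← pow_succ]
        simp only [mul_add, mul_sub, mul_smul_comm, ← mul_assoc, ← pow_succ, mul_one, smul_add,
          smul_sub, smul_smul]
        match_scalars
        · ring
        · linear_combination -lam * q ^ (n + 1) * qint_succ' q (n + 1)
        · linear_combination lam * qint_succ q (n + 1)


-- At `n = 0` the truncated `n - 1` is harmless since `qint q 0 = 0`.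
lemma y_mul_x_pow (hyx : y * x = q • (x * y) + lam • (c - 1))
    (hcx : SemiconjBy c x (q ^ 2 • x)) (n : ℕ) :
    y * x ^ n = q ^ n • (x ^ n * y) +
      x ^ (n - 1) * aeval c (C (lam * qint q n) * (C (q ^ (n - 1)) * X - 1)) := by
  cases n with
  | zero => simp [qint_zero]
  | succ n =>
    rw [y_mul_x_pow_succ hyx hcx, Nat.add_sub_cancel]
    simp only [map_mul, map_sub, aeval_C, aeval_X, map_one, Algebra.algebraMap_eq_smul_one,
      smul_mul_assoc, one_mul, mul_smul_comm, smul_smul, mul_comm lam]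

lemma y_mul_x_pow_aeval_y_pow (hyx : y * x = q • (x * y) + lam • (c - 1))
    (hcx : SemiconjBy c x (q ^ 2 • x)) (hyc : SemiconjBy y c (q ^ 2 • c))
    (f : k[X]) (n m : ℕ) :
    y * (x ^ n * aeval c f * y ^ m) =
      x ^ n * aeval c (C (q ^ n) * f.comp (C (q ^ 2) * X)) * y ^ (m + 1) +
        x ^ (n - 1) * aeval c (C (lam * qint q n) * (C (q ^ (n - 1)) * X - 1) * f) * y ^ m := by
  have hcomp : aeval c (f.comp (C (q ^ 2) * X)) = aeval (q ^ 2 • c) f := by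
    rw [aeval_comp, map_mul, aeval_C, aeval_X, ← Algebra.smul_def]
  rw [← mul_assoc, ← mul_assoc, y_mul_x_pow hyx hcx, add_mul, add_mul]
  congr 1
  · rw [map_mul, aeval_C, hcomp, ← Algebra.smul_def, smul_mul_assoc, smul_mul_assoc,
      mul_smul_comm, smul_mul_assoc, mul_assoc (x ^ n), (hyc.aeval f).eq, pow_succ' y m]
    simp only [mul_assoc]
  · rw [map_mul _ _ f, mul_assoc (x ^ (n - 1))]

end Relations

section Expansion

variable {k A : Type*} [Field k] [Ring A] [Algebra k A] {q lam : k} {c x y : A}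

theorem y_pow_mul_x_pow (hyx : y * x = q • (x * y) + lam • (c - 1))
    (hcx : SemiconjBy c x (q ^ 2 • x)) (hyc : SemiconjBy y c (q ^ 2 • c)) (j l : ℕ) :
    y ^ j * x ^ l =
      ∑ i ∈ range (j + 1), x ^ (l - i) * aeval c (kacCoeff q lam j l i) * y ^ (j - i) := by
  induction j with
  | zero => simp [kacCoeff_zero]
  | succ j ih =>
    set B : ℕ → A := fun i =>
      x ^ (l - i) * aeval c (C (q ^ (l - i)) * (kacCoeff q lam j l i).comp (C (q ^ 2) * X)) *
        y ^ (j + 1 - i)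
    set D : ℕ → A := fun i =>
      x ^ (l - i - 1) *
        aeval c (C (lam * qint q (l - i)) * (C (q ^ (l - i - 1)) * X - 1) *
          kacCoeff q lam j l i) * y ^ (j - i)
    have hstep : ∀ i ∈ range (j + 1),
        y * (x ^ (l - i) * aeval c (kacCoeff q lam j l i) * y ^ (j - i)) = B i + D i := by
      intro i hi
      have hij : i ≤ j := Nat.lt_succ_iff.mp (mem_range.mp hi)
      rw [y_mul_x_pow_aeval_y_pow hyx hcx hyc, ← Nat.sub_add_comm hij]
    have hB : ∑ i ∈ range (j + 1), B i = ∑ i ∈ range (j + 1), B (i + 1) + B 0 := by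
      rw [sum_range_succ' B, sum_range_succ (fun i => B (i + 1)),
        show B (j + 1) = 0 by simp [B, kacCoeff_eq_zero_of_lt_left (Nat.lt_succ_self j)],
        add_zero]
    calc y ^ (j + 1) * x ^ l = y * (y ^ j * x ^ l) := by rw [pow_succ', mul_assoc]
      _ = ∑ i ∈ range (j + 1), (B i + D i) := by rw [ih, mul_sum]; exact sum_congr rfl hstep
      _ = _ := by
        rw [sum_add_distrib, hB, sum_range_succ' _ (j + 1)]
        simp only [kacCoeff_succ_succ, kacCoeff_succ_zero, map_add, mul_add, add_mul,
          sum_add_distrib, B, D, Nat.sub_zero, Nat.add_sub_add_right, Nat.sub_add_eq l]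
        abel

theorem y_pow_mul_x_pow_sub (hyx : y * x = q • (x * y) + lam • (c - 1))
    (hcx : SemiconjBy c x (q ^ 2 • x)) (hyc : SemiconjBy y c (q ^ 2 • c)) (j l : ℕ) :
    y ^ j * x ^ l - q ^ (j * l) • (x ^ l * y ^ j) =
      ∑ i ∈ Icc 1 (min j l), x ^ (l - i) * aeval c (kacCoeff q lam j l i) * y ^ (j - i) := by
  set T : ℕ → A := fun i => x ^ (l - i) * aeval c (kacCoeff q lam j l i) * y ^ (j - i)
  have hT₀ : T 0 = q ^ (j * l) • (x ^ l * y ^ j) := by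
    rw [Algebra.smul_def, ← mul_assoc, Algebra.commutes]
    simp only [T, kacCoeff_zero, aeval_C, Nat.sub_zero, mul_comm l j]
  calc y ^ j * x ^ l - q ^ (j * l) • (x ^ l * y ^ j) = ∑ i ∈ range j, T (i + 1) := by
        rw [y_pow_mul_x_pow hyx hcx hyc, ← hT₀]
        exact sub_eq_of_eq_add (sum_range_succ' T j)
    _ = ∑ i ∈ Icc 1 j, T i := by
        rw [← Ico_add_one_right_eq_Icc, sum_Ico_eq_sum_range, Nat.add_sub_cancel]
        simp only [add_comm 1]
    _ = ∑ i ∈ Icc 1 (min j l), T i := by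
        refine (sum_subset (Icc_subset_Icc_right (min_le_left j l)) fun i hi hi' => ?_).symm
        simp only [mem_Icc, le_min_iff, not_and, not_le] at hi hi'
        simp [T, kacCoeff_eq_zero_of_lt_right (hi' hi.1 hi.2)]

end Expansion

section Evaluation

variable {k A : Type*} [Field k] [Ring A] [Algebra k A] (q lam : k) (c : A)

lemma aeval_kacFactor (t i : ℕ) :
    aeval c (kacFactor q t i) =
      ((List.range i).map fun m => q ^ (t + (i - 1 - m)) • c - 1).prod := by
  rw [kacFactor, ← prod_range_reflect, ← List.toFinset_range,
    List.prod_toFinset _ List.nodup_range, map_list_prod, List.map_map]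
  congr 1
  exact List.map_congr_left fun m _ => by simp [Algebra.smul_def]

lemma aeval_kacCoeff {j l i : ℕ} (h : 2 * i ≤ j + l) :
    aeval c (kacCoeff q lam j l i) =
      (lam ^ i * qbinom q j i * qbinom q l i * qfact q i * q ^ ((l - i) * (j - i))) •
        ((List.range i).map fun m => q ^ (j + l - (m + 1) - i) • c - 1).prod := by
  rw [kacCoeff, map_mul, aeval_C, ← Algebra.smul_def, aeval_kacFactor]
  congr 2
  exact List.map_congr_left fun m hm => by
    rw [show j + l - 2 * i + (i - 1 - m) = j + l - (m + 1) - i by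
      have := List.mem_range.mp hm; omega]

end Evaluation

section Conjugation

variable {k A : Type*} [Field k] [Ring A] [Algebra k A] {q : k}

lemma SemiconjBy.smul_of_smul_inv {u y : A} (hq : q ≠ 0) (h : SemiconjBy u y (q⁻¹ • y)) :
    SemiconjBy y u (q • u) := by
  rw [SemiconjBy, smul_mul_assoc, h.eq, smul_mul_assoc, smul_smul, mul_inv_cancel₀ hq, one_smul]

lemma conj_pow_of_conj_eq_smul {b : Aˣ} {x : A} (hb : (b : A) * x * ((b⁻¹ : Aˣ) : A) = q • x)
    (j l : ℕ) :
    (b : A) ^ j * x ^ l * ((b⁻¹ : Aˣ) : A) ^ j = q ^ (j * l) • x ^ l := by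
  have hbl : SemiconjBy (b : A) (x ^ l) (q ^ l • x ^ l) := by
    rw [← _root_.smul_pow]
    exact SemiconjBy.pow_right ((Units.mul_inv_eq_iff_eq_mul b).mp hb) l
  rw [← Units.val_pow_eq_pow_val, ← Units.val_pow_eq_pow_val, inv_pow,
    Units.mul_inv_eq_iff_eq_mul, Units.val_pow_eq_pow_val, mul_comm j, pow_mul]
  exact hbl.pow_left_of_smul j

end Conjugation

theorem kac_commutation_formula_general {k A : Type*} [Field k] [Ring A] [Algebra k A]
    (a b : Aˣ) (x y : A) (q lam : k) (hq : q ≠ 0)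
    (hax : (a : A) * x * ((a⁻¹ : Aˣ) : A) = q • x)
    (hbx : (b : A) * x * ((b⁻¹ : Aˣ) : A) = q • x)
    (hay : (a : A) * y * ((a⁻¹ : Aˣ) : A) = q⁻¹ • y)
    (hby : (b : A) * y * ((b⁻¹ : Aˣ) : A) = q⁻¹ • y)
    (hc : y * x - ((b : A) * x * ((b⁻¹ : Aˣ) : A)) * y = lam • ((a : A) * (b : A) - 1)) :
    ∀ j l : ℕ, 1 ≤ j → 1 ≤ l →
      y ^ j * x ^ l - ((b : A) ^ j * x ^ l * ((b⁻¹ : Aˣ) : A) ^ j) * y ^ j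
        = ∑ i ∈ Finset.Icc 1 (min j l),
            x ^ (l - i) *
              ((lam ^ i * qbinom q j i * qbinom q l i * qfact q i * q ^ ((l - i) * (j - i))) •
                ((List.range i).map
                    (fun m => q ^ (j + l - (m + 1) - i) • ((a : A) * (b : A)) - 1)).prod) *
              y ^ (j - i) := by
  intro j l _ _
  have hxa : SemiconjBy (a : A) x (q • x) := (Units.mul_inv_eq_iff_eq_mul a).mp hax
  have hxb : SemiconjBy (b : A) x (q • x) := (Units.mul_inv_eq_iff_eq_mul b).mp hbx
  have hya := SemiconjBy.smul_of_smul_inv hq ((Units.mul_inv_eq_iff_eq_mul a).mp hay)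
  have hyb := SemiconjBy.smul_of_smul_inv hq ((Units.mul_inv_eq_iff_eq_mul b).mp hby)
  have hyx : y * x = q • (x * y) + lam • ((a : A) * b - 1) := by
    rw [← hc, hbx, smul_mul_assoc, add_sub_cancel]
  have hcx : SemiconjBy ((a : A) * b) x (q ^ 2 • x) := by
    rw [sq, mul_smul]
    exact (hxa.smul_right q).mul_left hxb
  have hyc : SemiconjBy y ((a : A) * b) (q ^ 2 • ((a : A) * b)) := by
    rw [sq, ← smul_mul_smul_comm]
    exact hya.mul_right hyb
  rw [conj_pow_of_conj_eq_smul hbx, smul_mul_assoc, y_pow_mul_x_pow_sub hyx hcx hyc]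
  refine sum_congr rfl fun i hi => ?_
  simp only [mem_Icc, le_min_iff] at hi
  rw [aeval_kacCoeff q lam _ (by omega : 2 * i ≤ j + l)]

/-- Generalized Kac commutation formula:
`_{b^j}[y^j, x^k] = Σ_{i=1}^{min(j,k)} x^{k-i} f_i^{j,k} y^{j-i}` with
`f_i^{j,k} = λ^i binom(j,i)_q binom(k,i)_q (i)_q! q^{(k-i)(j-i)} Π_{m=1}^i (q^{j+k-m-i} ab - 1)`. -/
theorem kac_commutation_formula {k A : Type*} [Field k] [CharZero k] [Ring A] [Algebra k A]
    (a b : Aˣ) (x y : A) (q lam : k) (hq : q ≠ 0) (hlam : lam ≠ 0)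
    (hax : (a : A) * x * ((a⁻¹ : Aˣ) : A) = q • x)
    (hbx : (b : A) * x * ((b⁻¹ : Aˣ) : A) = q • x)
    (hay : (a : A) * y * ((a⁻¹ : Aˣ) : A) = q⁻¹ • y)
    (hby : (b : A) * y * ((b⁻¹ : Aˣ) : A) = q⁻¹ • y)
    (hc : y * x - ((b : A) * x * ((b⁻¹ : Aˣ) : A)) * y = lam • ((a : A) * (b : A) - 1)) :
    ∀ j l : ℕ, 1 ≤ j → 1 ≤ l →
      y ^ j * x ^ l - ((b : A) ^ j * x ^ l * ((b⁻¹ : Aˣ) : A) ^ j) * y ^ j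
        = ∑ i ∈ Finset.Icc 1 (min j l),
            x ^ (l - i) *
              ((lam ^ i * qbinom q j i * qbinom q l i * qfact q i * q ^ ((l - i) * (j - i))) •
                ((List.range i).map
                    (fun m => q ^ (j + l - (m + 1) - i) • ((a : A) * (b : A)) - 1)).prod) *
              y ^ (j - i) :=
  kac_commutation_formula_general a b x y q lam hq hax hbx hay hby hc
end

section
/- Let M be a multiplicity-free module of finite length over a ring A (every simple module occurs at most once in a composition series). Then the map J ↦ J/rad(J) is a bijection between the set of local (join-irreducible) submodules of M and the set of isomorphism classes of composition factors of M. In particular the composition length of M equals the number of local submodules of M. -/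
/-!
Fix a composition factor `S` and let `J` be minimal among the submodules having `S` as a
composition factor. By the second isomorphism theorem and minimality, `J/R ≅ S` for every maximal
submodule `R` of `J`; two distinct maximal submodules `R, R'` would make `R/(R ⊓ R') ≅ J/R'` and
`J/R` two copies of `S` in one composition series, so `J` is local with top `S`. Conversely, if
`J, J'` are local with isomorphic tops and `J' ⊈ J`, then `J ⊓ J' ≤ rad J'`, so the top of `J'`
reappears as `(J ⊔ J')/(J ⊔ rad J')`, above the copy `J/rad J` of the same simple module.
Jordan–Hölder places the top of every local submodule in every composition series.
-/

open DirectSum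

variable {A M : Type*} [Ring A] [AddCommGroup M] [Module A M]

/-- The radical of a submodule `N`: the intersection of its maximal submodules. -/
def radOf (N : Submodule A M) : Submodule A M := sInf {K : Submodule A M | K ⋖ N}

/-- A submodule is local (join-irreducible) if it is nonzero and has a unique
maximal submodule. -/
def IsLocalSub (J : Submodule A M) : Prop := J ≠ ⊥ ∧ ∃! R : Submodule A M, R ⋖ J

/-- The top (head) of a submodule: `J / rad(J)`. -/
abbrev topQuot (J : Submodule A M) :=
  ↥J ⧸ Submodule.comap J.subtype (radOf J)

/-- The `i`-th factor of a composition series of submodules. -/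
abbrev csFactor (s : CompositionSeries (Submodule A M)) (i : Fin s.length) :=
  ↥(s i.succ) ⧸ Submodule.comap (s i.succ).subtype (s i.castSucc)

/-- `M` is multiplicity free: in any composition series of `M`, no two distinct
factors are isomorphic. -/
def MultFree (A M : Type*) [Ring A] [AddCommGroup M] [Module A M] : Prop :=
  ∀ s : CompositionSeries (Submodule A M), s.head = ⊥ → s.last = ⊤ →
    ∀ i j : Fin s.length, Nonempty (csFactor s i ≃ₗ[A] csFactor s j) → i = j

namespace RelSeries

variable {α : Type*} {r : SetRel α α}

lemma mem_smash_left {p q : RelSeries r} (h : p.last = q.head) {x : α} (hx : x ∈ p) :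
    x ∈ p.smash q h := by
  obtain ⟨i, rfl⟩ := hx
  exact ⟨_, smash_castLE h i⟩

lemma mem_smash_right {p q : RelSeries r} (h : p.last = q.head) {x : α} (hx : x ∈ q) :
    x ∈ p.smash q h := by
  obtain ⟨i, rfl⟩ := hx
  cases i using Fin.cases with
  | zero => exact (show q 0 = p.last from h.symm) ▸ mem_smash_left h p.last_mem
  | succ j => exact ⟨_, smash_succ_natAdd h j⟩

end RelSeries

namespace CompositionSeries

variable {X : Type*} [Lattice X] [IsModularLattice X]

lemma exists_head_eq_last_eq [WellFoundedLT X] [WellFoundedGT X] {x y : X} (h : x ≤ y) :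
    ∃ s : CompositionSeries X, s.head = x ∧ s.last = y := by
  obtain ⟨a, ha₀, n, hn, ha⟩ := exists_covBy_seq_of_wellFoundedLT_wellFoundedGT_of_le h
  exact ⟨⟨n, fun i => a i, fun i => ha i i.2⟩, ha₀, hn⟩

lemma exists_superseries [BoundedOrder X] [WellFoundedLT X] [WellFoundedGT X]
    (t : CompositionSeries X) :
    ∃ s : CompositionSeries X, s.head = ⊥ ∧ s.last = ⊤ ∧ ∀ x ∈ t, x ∈ s := by
  obtain ⟨p, hp₀, hp₁⟩ := exists_head_eq_last_eq (bot_le : ⊥ ≤ t.head)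
  obtain ⟨q, hq₀, hq₁⟩ := exists_head_eq_last_eq (le_top : t.last ≤ ⊤)
  exact ⟨p.smash (t.smash q hq₀.symm) (hp₁.trans (RelSeries.head_smash _).symm), by simp [hp₀],
    by simp [hq₁], fun x hx => RelSeries.mem_smash_right _ (RelSeries.mem_smash_left _ hx)⟩

lemma exists_castSucc_eq_succ_eq_of_covBy (t : CompositionSeries X) {x y : X} (hxy : x ⋖ y)
    (hx : x ∈ t) (hy : y ∈ t) : ∃ i : Fin t.length, t i.castSucc = x ∧ t i.succ = y := by
  obtain ⟨a, rfl⟩ := hx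
  obtain ⟨b, rfl⟩ := hy
  have hab : a < b := t.strictMono.lt_iff_lt.mp hxy.lt
  let i : Fin t.length := ⟨a, by omega⟩
  have hstep : t i.castSucc ⋖ t i.succ := t.step i
  have hle : t i.succ ≤ t b := t.strictMono.monotone (Fin.le_def.mpr (by simp [i]; omega))
  exact ⟨i, rfl, (hxy.eq_or_eq hstep.lt.le hle).resolve_left hstep.lt.ne'⟩

end CompositionSeries

abbrev subquot (K L : Submodule A M) : Type _ := ↥L ⧸ Submodule.comap L.subtype K

lemma subquot_congr {K L K' L' : Submodule A M} (hK : K = K') (hL : L = L') :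
    Nonempty (subquot K L ≃ₗ[A] subquot K' L') := by
  subst hK hL
  exact ⟨LinearEquiv.refl A _⟩

lemma nonempty_subquot_sup_equiv (x y : Submodule A M) :
    Nonempty (subquot x (x ⊔ y) ≃ₗ[A] subquot (x ⊓ y) y) := by
  rw [sup_comm, inf_comm]
  exact ⟨(LinearMap.quotientInfEquivSupQuotient y x).symm⟩

lemma inf_covBy_and_nonempty_subquot_equiv {x y z : Submodule A M} (hxz : x ⋖ z)
    (hz : x ⊔ y = z) : x ⊓ y ⋖ y ∧ Nonempty (subquot x z ≃ₗ[A] subquot (x ⊓ y) y) := by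
  subst hz
  exact ⟨inf_covBy_of_covBy_sup_left hxz, nonempty_subquot_sup_equiv x y⟩

theorem MultFree.not_nonempty_subquot_equiv [IsNoetherian A M] [IsArtinian A M]
    (hMF : MultFree A M) {K₁ L₁ K₂ L₂ : Submodule A M} (h₁ : K₁ ⋖ L₁) (h₂ : K₂ ⋖ L₂)
    (h : L₁ ≤ K₂) : ¬ Nonempty (subquot K₁ L₁ ≃ₗ[A] subquot K₂ L₂) := by
  rintro ⟨e⟩
  obtain ⟨q, hq₀, hq₁⟩ := CompositionSeries.exists_head_eq_last_eq h
  let q' : CompositionSeries (Submodule A M) := q.cons K₁ (hq₀ ▸ h₁)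
  -- the chain `K₁ ⋖ L₁ = q.head ≤ ⋯ ≤ q.last = K₂ ⋖ L₂`
  let t : CompositionSeries (Submodule A M) :=
    q'.snoc L₂ (by rw [RelSeries.last_cons, hq₁]; exact h₂)
  obtain ⟨s, hs₀, hs₁, hts⟩ := t.exists_superseries
  obtain ⟨i, hi₀, hi₁⟩ := s.exists_castSucc_eq_succ_eq_of_covBy h₁
    (hts _ (RelSeries.mem_snoc.mpr (.inl (RelSeries.head_mem _))))
    (hts _ (RelSeries.mem_snoc.mpr (.inl (hq₀ ▸ ⟨_, RelSeries.cons_cast_succ q K₁ _ 0⟩))))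
  obtain ⟨j, hj₀, hj₁⟩ := s.exists_castSucc_eq_succ_eq_of_covBy h₂
    (hts _ (RelSeries.mem_snoc.mpr (.inl (hq₁ ▸ RelSeries.last_cons q K₁ _ ▸ q'.last_mem))))
    (hts _ (RelSeries.mem_snoc.mpr (.inr rfl)))
  have hij : i ≠ j := by
    rintro rfl
    exact h₁.lt.not_ge (h.trans (hj₀.symm.trans hi₀).le)
  obtain ⟨eᵢ⟩ := subquot_congr hi₀ hi₁
  obtain ⟨eⱼ⟩ := subquot_congr hj₀ hj₁
  exact hij (hMF s hs₀ hs₁ i j ⟨eᵢ.trans (e.trans eⱼ.symm)⟩)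

theorem CompositionSeries.exists_nonempty_subquot_equiv [IsNoetherian A M] [IsArtinian A M]
    (s : CompositionSeries (Submodule A M)) (hs₀ : s.head = ⊥) (hs₁ : s.last = ⊤)
    {K L : Submodule A M} (h : K ⋖ L) :
    ∃ i : Fin s.length, Nonempty (csFactor s i ≃ₗ[A] subquot K L) := by
  let u : CompositionSeries (Submodule A M) := (RelSeries.singleton _ K).snoc L h
  obtain ⟨t, ht₀, ht₁, hts⟩ := u.exists_superseries
  obtain ⟨i, hi₀, hi₁⟩ := t.exists_castSucc_eq_succ_eq_of_covBy h
    (hts _ (RelSeries.head_mem _)) (hts _ (RelSeries.last_mem _))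
  obtain ⟨f, hf⟩ := CompositionSeries.jordan_holder t s (ht₀.trans hs₀.symm) (ht₁.trans hs₁.symm)
  obtain ⟨e⟩ := subquot_congr hi₀ hi₁
  exact ⟨f i, ⟨(hf i).linearEquiv.symm.trans e⟩⟩

namespace IsLocalSub

variable {J : Submodule A M}

lemma radOf_eq {R : Submodule A M} (hJ : IsLocalSub J) (hR : R ⋖ J) : radOf J = R := by
  obtain ⟨-, R₀, -, huniq⟩ := hJ
  have hmax : {K | K ⋖ J} = {R} :=
    Set.ext fun K => ⟨fun hK => (huniq K hK).trans (huniq R hR).symm, fun hK => hK ▸ hR⟩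
  rw [radOf, hmax, sInf_singleton]

lemma radOf_covBy (hJ : IsLocalSub J) : radOf J ⋖ J := by
  obtain ⟨R, hR, -⟩ := hJ.2
  rwa [hJ.radOf_eq hR]

lemma le_radOf_of_lt [IsNoetherian A M] {N : Submodule A M} (hJ : IsLocalSub J) (hN : N < J) :
    N ≤ radOf J := by
  obtain ⟨R, hNR, hR⟩ := exists_le_covBy_of_lt hN
  rwa [hJ.radOf_eq hR]

end IsLocalSub

theorem MultFree.le_of_nonempty_topQuot_equiv [IsNoetherian A M] [IsArtinian A M]
    (hMF : MultFree A M) {J J' : Submodule A M} (hJ : IsLocalSub J) (hJ' : IsLocalSub J')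
    (e : Nonempty (topQuot J ≃ₗ[A] topQuot J')) : J' ≤ J := by
  by_contra hJ'J
  have hinf : J ⊓ J' ≤ radOf J' :=
    hJ'.le_radOf_of_lt (inf_le_right.lt_of_ne fun h => hJ'J (inf_eq_right.mp h))
  have hmod : (J ⊔ radOf J') ⊓ J' = radOf J' := by
    rw [inf_comm, ← inf_sup_assoc_of_le J hJ'.radOf_covBy.le, inf_comm, sup_eq_right.mpr hinf]
  have hcov : J ⊔ radOf J' ⋖ (J ⊔ radOf J') ⊔ J' :=
    covBy_sup_of_inf_covBy_right (by rw [hmod]; exact hJ'.radOf_covBy)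
  obtain ⟨f⟩ := nonempty_subquot_sup_equiv (J ⊔ radOf J') J'
  obtain ⟨g⟩ := subquot_congr hmod rfl
  obtain ⟨e⟩ := e
  exact hMF.not_nonempty_subquot_equiv hJ.radOf_covBy hcov le_sup_left
    ⟨e.trans (f.trans g).symm⟩

theorem MultFree.eq_of_nonempty_topQuot_equiv [IsNoetherian A M] [IsArtinian A M]
    (hMF : MultFree A M) {J J' : Submodule A M} (hJ : IsLocalSub J) (hJ' : IsLocalSub J')
    (e : Nonempty (topQuot J ≃ₗ[A] topQuot J')) : J = J' :=
  le_antisymm (hMF.le_of_nonempty_topQuot_equiv hJ' hJ (e.map LinearEquiv.symm))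
    (hMF.le_of_nonempty_topQuot_equiv hJ hJ' e)

theorem MultFree.eq_of_covBy_of_nonempty_subquot_equiv [IsNoetherian A M] [IsArtinian A M]
    (hMF : MultFree A M) {R R' J : Submodule A M} (hR : R ⋖ J) (hR' : R' ⋖ J)
    (e : Nonempty (subquot R J ≃ₗ[A] subquot R' J)) : R = R' := by
  by_contra hne
  obtain ⟨hcov, ⟨f⟩⟩ := inf_covBy_and_nonempty_subquot_equiv hR (hR.wcovBy.sup_eq hR'.wcovBy hne)
  obtain ⟨e⟩ := e
  exact hMF.not_nonempty_subquot_equiv hcov hR' le_rfl ⟨f.symm.trans e⟩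

def HasCompositionFactor (N : Submodule A M) (V : Type*) [AddCommGroup V] [Module A V] : Prop :=
  ∃ P Q : Submodule A M, P ⋖ Q ∧ Q ≤ N ∧ Nonempty (subquot P Q ≃ₗ[A] V)

lemma Minimal.nonempty_subquot_equiv {V : Type*} [AddCommGroup V] [Module A V]
    {N R : Submodule A M} (hN : Minimal (HasCompositionFactor · V) N) (hR : R ⋖ N) :
    Nonempty (subquot R N ≃ₗ[A] V) := by
  obtain ⟨⟨P, Q, hPQ, hQN, ⟨e⟩⟩, hmin⟩ := hN
  have hR_not : ¬ HasCompositionFactor R V := fun hRV => hR.lt.not_ge (hmin hRV hR.le)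
  have hQR : ¬ Q ≤ R := fun hQR => hR_not ⟨P, Q, hPQ, hQR, ⟨e⟩⟩
  have hRQ : R ⊔ Q = N := (hR.eq_or_eq le_sup_left (sup_le hR.le hQN)).resolve_left
    fun h => hQR (sup_eq_left.mp h)
  obtain ⟨hRQ_cov, ⟨f⟩⟩ := inf_covBy_and_nonempty_subquot_equiv hR hRQ
  by_cases hP : R ⊓ Q = P
  · obtain ⟨g⟩ := subquot_congr hP rfl
    exact ⟨f.trans (g.trans e)⟩
  · obtain ⟨hcov, ⟨g⟩⟩ := inf_covBy_and_nonempty_subquot_equiv hPQ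
      (hPQ.wcovBy.sup_eq hRQ_cov.wcovBy (Ne.symm hP))
    exact (hR_not ⟨_, _, hcov, inf_le_left, ⟨g.symm.trans e⟩⟩).elim

theorem MultFree.exists_isLocalSub_nonempty_subquot_equiv [IsNoetherian A M] [IsArtinian A M]
    (hMF : MultFree A M) {P Q : Submodule A M} (h : P ⋖ Q) :
    ∃ J : Submodule A M, IsLocalSub J ∧ Nonempty (subquot P Q ≃ₗ[A] topQuot J) := by
  obtain ⟨J, hJ⟩ := exists_minimal_of_wellFoundedLT
    (fun N : Submodule A M => HasCompositionFactor N (subquot P Q))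
    ⟨Q, P, Q, h, le_rfl, ⟨LinearEquiv.refl A _⟩⟩
  obtain ⟨P', Q', hP'Q', hQ'J, -⟩ := hJ.prop
  have hJ₀ : J ≠ ⊥ := fun hJ₀ => not_lt_bot (hJ₀ ▸ hP'Q'.lt.trans_le hQ'J)
  obtain ⟨R, -, hR⟩ := exists_le_covBy_of_lt (bot_lt_iff_ne_bot.mpr hJ₀)
  have hJloc : IsLocalSub J := by
    refine ⟨hJ₀, R, hR, fun R' hR' => hMF.eq_of_covBy_of_nonempty_subquot_equiv hR' hR ?_⟩
    obtain ⟨e⟩ := hJ.nonempty_subquot_equiv hR'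
    obtain ⟨e'⟩ := hJ.nonempty_subquot_equiv hR
    exact ⟨e.trans e'.symm⟩
  obtain ⟨e⟩ := hJ.nonempty_subquot_equiv hJloc.radOf_covBy
  exact ⟨J, hJloc, ⟨e.symm⟩⟩

theorem MultFree.length_eq_card_isLocalSub [IsNoetherian A M] [IsArtinian A M]
    (hMF : MultFree A M) (s : CompositionSeries (Submodule A M)) (hs₀ : s.head = ⊥)
    (hs₁ : s.last = ⊤) : s.length = Nat.card {J : Submodule A M // IsLocalSub J} := by
  choose J hJ e using
    fun i : Fin s.length => hMF.exists_isLocalSub_nonempty_subquot_equiv (s.step i)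
  let f : Fin s.length → {J : Submodule A M // IsLocalSub J} := fun i => ⟨J i, hJ i⟩
  have hf : f.Bijective := by
    refine ⟨fun i j hij => ?_, fun ⟨J', hJ'⟩ => ?_⟩
    · obtain ⟨eᵢ⟩ := e i
      obtain ⟨eⱼ⟩ := e j
      rw [show J i = J j from congrArg Subtype.val hij] at eᵢ
      exact hMF s hs₀ hs₁ i j ⟨eᵢ.trans eⱼ.symm⟩
    · obtain ⟨i, ⟨g⟩⟩ := s.exists_nonempty_subquot_equiv hs₀ hs₁ hJ'.radOf_covBy
      obtain ⟨eᵢ⟩ := e i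
      exact ⟨i, Subtype.ext (hMF.eq_of_nonempty_topQuot_equiv (hJ i) hJ' ⟨eᵢ.symm.trans g⟩)⟩
  rw [← Nat.card_eq_of_bijective f hf, Nat.card_eq_fintype_card, Fintype.card_fin]

/-- For a multiplicity-free module of finite length, `J ↦ J/rad(J)` is a bijection
between local submodules and (isomorphism classes of) composition factors;
in particular the composition length equals the number of local submodules. -/
theorem local_submodules_biject_with_factors
    [IsNoetherian A M] [IsArtinian A M] (hMF : MultFree A M) :
    (∀ J J' : Submodule A M, IsLocalSub J → IsLocalSub J' →
        Nonempty (topQuot J ≃ₗ[A] topQuot J') → J = J') ∧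
    (∀ s : CompositionSeries (Submodule A M), s.head = ⊥ → s.last = ⊤ →
        (∀ i : Fin s.length, ∃ J : Submodule A M, IsLocalSub J ∧
            Nonempty (csFactor s i ≃ₗ[A] topQuot J)) ∧
        (∀ J : Submodule A M, IsLocalSub J →
            ∃ i : Fin s.length, Nonempty (csFactor s i ≃ₗ[A] topQuot J)) ∧
        s.length = Nat.card {J : Submodule A M // IsLocalSub J}) :=
  ⟨fun _ _ hJ hJ' e => hMF.eq_of_nonempty_topQuot_equiv hJ hJ' e, fun s hs₀ hs₁ =>
    ⟨fun i => hMF.exists_isLocalSub_nonempty_subquot_equiv (s.step i),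
      fun _ hJ => s.exists_nonempty_subquot_equiv hs₀ hs₁ hJ.radOf_covBy,
      hMF.length_eq_card_isLocalSub s hs₀ hs₁⟩⟩
end
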